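/- The trivariate q-polynomials F_n(x,y,z;q) := (-1)^n q^{-n(n-1)/2} ∑_{k=0}^{n} [n choose k]_q (-1)^k q^{k(k-1)/2} P_{n-k}(y,x) z^k satisfy the generating function ∑_{n=0}^{∞} F_n(x,y,z;q) (-1)^n q^{n(n-1)/2} t^n / (q;q)_n = (xt;q)_∞ (zt;q)_∞ / (yt;q)_∞, as formal power series in t (or for |yt| < 1). -/

import Mathlib

open Finset Complex

noncomputable def qPoch (a q : ℂ) (n : ℕ) : ℂ :=
  ∏ j ∈ Finset.range n, (1 - a * q ^ j)

noncomputable def qBinom (q : ℂ) (n k : ℕ) : ℂ :=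
  qPoch q q n / (qPoch q q k * qPoch q q (n - k))

noncomputable def cauchyP (q x y : ℂ) (n : ℕ) : ℂ :=
  ∏ j ∈ Finset.range n, (x - q ^ j * y)

noncomputable def Fpoly (q x y z : ℂ) (n : ℕ) : ℂ :=
  (-1) ^ n * q ^ (-((n * (n - 1) / 2 : ℕ) : ℤ)) *
    ∑ k ∈ Finset.range (n + 1),
      qBinom q n k * (-1) ^ k * q ^ (k * (k - 1) / 2) * cauchyP q y x (n - k) * z ^ k

noncomputable def Pq (q ξ y ζ z : ℂ) (n : ℕ) : ℂ :=
  ∑ k ∈ Finset.range (n + 1),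
    qBinom q n k * q ^ (k * (k - 1) / 2) * cauchyP q ξ y (n - k) * (-1) ^ k * cauchyP q ζ z k

noncomputable def psiH (q a x y : ℂ) (n : ℕ) : ℂ := Fpoly q x (a * x) y n

noncomputable def qExp (q z : ℂ) : ℂ := ∑' k : ℕ, z ^ k / qPoch q q k

noncomputable def qExpE (q z : ℂ) : ℂ := ∑' k : ℕ, q ^ (k * (k - 1) / 2) * z ^ k / qPoch q q k

noncomputable def thetaOp (q : ℂ) (g : ℂ → ℂ → ℂ) : ℂ → ℂ → ℂ :=
  fun x y => (g (q⁻¹ * x) y - g x (q * y)) / (q⁻¹ * x - y)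

/-! Since `(-1)^k q^(k(k-1)/2) z^k = P_k(0, z)`, the series is the Cauchy product of the
q-binomial series `f(t) = ∑ P_n(y, x) t^n / (q;q)_n` and its specialisation at `y = 0`, which is
Euler's series for `(zt;q)_∞`. Comparing coefficients shows that `f` satisfies the q-difference
equation `(1 - yt) f(t) = (1 - xt) f(qt)`; iterating it `N` times and letting `N → ∞`, where
`f(q^N t) → f(0) = 1` by dominated convergence, gives `f(t) = (xt;q)_∞ / (yt;q)_∞`. -/

open Filter Topology

section Products

variable {q : ℂ}

lemma one_sub_mul_pow_ne_zero {w : ℂ} (hq : ‖q‖ ≤ 1) (hw : ‖w‖ < 1) (j : ℕ) :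
    1 - w * q ^ j ≠ 0 := by
  intro h
  have : ‖w * q ^ j‖ < 1 := by
    rw [norm_mul, norm_pow]
    exact mul_lt_one_of_nonneg_of_lt_one_left (norm_nonneg w) hw
      (pow_le_one₀ (norm_nonneg q) hq)
  rw [← sub_eq_zero.1 h, norm_one] at this
  exact this.false

lemma summable_norm_mul_pow (w : ℂ) (hq : ‖q‖ < 1) :
    Summable fun j : ℕ => ‖w * q ^ j‖ := by
  simpa [norm_mul, norm_pow] using
    (summable_geometric_of_lt_one (norm_nonneg q) hq).mul_left ‖w‖

lemma multipliable_one_sub_mul_pow (w : ℂ) (hq : ‖q‖ < 1) :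
    Multipliable fun j : ℕ => 1 - w * q ^ j := by
  simpa [sub_eq_add_neg] using
    multipliable_one_add_of_summable (f := fun j => -(w * q ^ j))
      (by simpa using summable_norm_mul_pow w hq)

lemma tprod_one_sub_mul_pow_ne_zero {w : ℂ} (hq : ‖q‖ < 1) (hw : ‖w‖ < 1) :
    ∏' j : ℕ, (1 - w * q ^ j) ≠ 0 := by
  simpa [sub_eq_add_neg] using tprod_one_add_ne_zero_of_summable
    (fun j => by simpa [sub_eq_add_neg] using one_sub_mul_pow_ne_zero hq.le hw j)
    (by simpa using summable_norm_mul_pow w hq)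

lemma qPoch_ne_zero (hq : ‖q‖ < 1) (n : ℕ) : qPoch q q n ≠ 0 :=
  prod_ne_zero_iff.2 fun j _ => one_sub_mul_pow_ne_zero hq.le hq j

end Products

lemma eq_tprod_div_tprod_of_qDifference {q x y t : ℂ} {f : ℂ → ℂ} (hq : ‖q‖ < 1)
    (hyt : ‖y * t‖ < 1)
    (hf : ∀ N : ℕ, (1 - y * (q ^ N * t)) * f (q ^ N * t)
      = (1 - x * (q ^ N * t)) * f (q * (q ^ N * t)))
    (hlim : Tendsto (fun N : ℕ => f (q ^ N * t)) atTop (𝓝 1)) :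
    f t = (∏' j : ℕ, (1 - x * t * q ^ j)) / ∏' j : ℕ, (1 - y * t * q ^ j) := by
  have iterate (N : ℕ) : f t * ∏ j ∈ range N, (1 - y * t * q ^ j)
      = (∏ j ∈ range N, (1 - x * t * q ^ j)) * f (q ^ N * t) := by
    induction N with
    | zero => simp
    | succ N ih =>
      have h := hf N
      rw [← mul_assoc q, ← pow_succ'] at h
      rw [prod_range_succ, prod_range_succ, ← mul_assoc, ih]
      linear_combination (∏ j ∈ range N, (1 - x * t * q ^ j)) * h
  have hY := (multipliable_one_sub_mul_pow (y * t) hq).hasProd.tendsto_prod_nat.const_mul (f t)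
  have hX := (multipliable_one_sub_mul_pow (x * t) hq).hasProd.tendsto_prod_nat.mul hlim
  rw [eq_div_iff (tprod_one_sub_mul_pow_ne_zero hq hyt)]
  simpa using tendsto_nhds_unique (hY.congr iterate) hX

lemma tendsto_tsum_mul_pow_of_tendsto_zero {α 𝕜 : Type*} [NormedField 𝕜] [CompleteSpace 𝕜]
    {l : Filter α} {c : ℕ → 𝕜} {r : 𝕜} (hc : Summable fun n => ‖c n * r ^ n‖)
    {u : α → 𝕜} (hu : Tendsto u l (𝓝 0)) (hur : ∀ a, ‖u a‖ ≤ ‖r‖) :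
    Tendsto (fun a => ∑' n, c n * u a ^ n) l (𝓝 (c 0)) := by
  have h := tendsto_tsum_of_dominated_convergence hc (fun n => (hu.pow n).const_mul (c n))
    (Eventually.of_forall fun a n => ?_)
  · rwa [tsum_eq_single 0 (fun n hn => by simp [hn]), pow_zero, mul_one] at h
  · rw [norm_mul, norm_mul, norm_pow, norm_pow]
    gcongr
    exact hur a

/-- `P_n(y, x) / (q;q)_n`, note the order of `x` and `y` in `cauchyP`. -/
noncomputable def cauchyCoeff (q x y : ℂ) (n : ℕ) : ℂ := cauchyP q y x n / qPoch q q n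

section CauchyCoeff

variable {q x y : ℂ}

@[simp]
lemma cauchyCoeff_zero : cauchyCoeff q x y 0 = 1 := by
  simp [cauchyCoeff, cauchyP, qPoch]

lemma cauchyCoeff_succ (n : ℕ) :
    cauchyCoeff q x y (n + 1) = cauchyCoeff q x y n * ((y - q ^ n * x) / (1 - q ^ (n + 1))) := by
  unfold cauchyCoeff cauchyP qPoch
  rw [prod_range_succ, prod_range_succ, pow_succ' q n, div_mul_div_comm]

lemma summable_norm_cauchyCoeff_mul_pow {u : ℂ} (hq : ‖q‖ < 1) (hyu : ‖y * u‖ < 1) :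
    Summable fun n => ‖cauchyCoeff q x y n * u ^ n‖ := by
  set ρ : ℕ → ℂ := fun n => (y - q ^ n * x) / (1 - q ^ (n + 1)) * u
  have hstep (n : ℕ) :
      cauchyCoeff q x y (n + 1) * u ^ (n + 1) = ρ n * (cauchyCoeff q x y n * u ^ n) := by
    rw [cauchyCoeff_succ, pow_succ]
    ring
  have hρ : Tendsto ρ atTop (𝓝 (y * u)) := by
    have hqn := tendsto_pow_atTop_nhds_zero_of_norm_lt_one hq
    simpa using ((tendsto_const_nhds.sub (hqn.mul_const x)).div
      (tendsto_const_nhds.sub (hqn.comp (tendsto_add_atTop_nat 1)))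
      (by simp : (1 : ℂ) - 0 ≠ 0)).mul_const u
  have hr : ‖y * u‖ < (1 + ‖y * u‖) / 2 := by linarith
  refine summable_of_ratio_norm_eventually_le (r := (1 + ‖y * u‖) / 2) (by linarith) ?_
  filter_upwards [hρ.norm.eventually (gt_mem_nhds hr)] with n hn
  rw [norm_norm, norm_norm, hstep, norm_mul]
  exact mul_le_mul_of_nonneg_right hn.le (norm_nonneg _)

lemma cauchySeries_qDifference {u : ℂ} (hq : ‖q‖ < 1) (hyu : ‖y * u‖ < 1) :
    (1 - y * u) * ∑' n, cauchyCoeff q x y n * u ^ n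
      = (1 - x * u) * ∑' n, cauchyCoeff q x y n * (q * u) ^ n := by
  have hyqu : ‖y * (q * u)‖ < 1 := by
    rw [mul_left_comm, norm_mul]
    exact mul_lt_one_of_nonneg_of_lt_one_right hq.le (norm_nonneg _) hyu
  set a : ℕ → ℂ := fun n => cauchyCoeff q x y n * u ^ n
  set b : ℕ → ℂ := fun n => cauchyCoeff q x y n * (q * u) ^ n
  have ha : HasSum a (∑' n, a n) := (summable_norm_cauchyCoeff_mul_pow hq hyu).of_norm.hasSum
  have hb : HasSum b (∑' n, b n) := (summable_norm_cauchyCoeff_mul_pow hq hyqu).of_norm.hasSum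
  have hstep (n : ℕ) : a (n + 1) - b (n + 1) = y * u * a n - x * u * b n := by
    have hn : 1 - q ^ (n + 1) ≠ 0 := by
      simpa [← pow_succ'] using one_sub_mul_pow_ne_zero hq.le hq n
    simp only [a, b, cauchyCoeff_succ]
    field_simp
    ring
  have hshift : HasSum (fun n => a (n + 1) - b (n + 1)) (∑' n, a n - ∑' n, b n) := by
    simpa [a, b] using (hasSum_nat_add_iff' 1).2 (ha.sub hb)
  have hsum := ((ha.mul_left (y * u)).sub (hb.mul_left (x * u))).unique
    (hshift.congr_fun fun n => (hstep n).symm)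
  linear_combination -hsum

theorem hasSum_cauchyCoeff_mul_pow {t : ℂ} (hq : ‖q‖ < 1) (hyt : ‖y * t‖ < 1) :
    HasSum (fun n => cauchyCoeff q x y n * t ^ n)
      ((∏' j : ℕ, (1 - x * t * q ^ j)) / ∏' j : ℕ, (1 - y * t * q ^ j)) := by
  have hqN (N : ℕ) : ‖q ^ N * t‖ ≤ ‖t‖ := by
    rw [norm_mul, norm_pow]
    exact mul_le_of_le_one_left (norm_nonneg t) (pow_le_one₀ (norm_nonneg q) hq.le)
  have hyN (N : ℕ) : ‖y * (q ^ N * t)‖ < 1 := by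
    refine lt_of_le_of_lt ?_ hyt
    rw [norm_mul, norm_mul y]
    exact mul_le_mul_of_nonneg_left (hqN N) (norm_nonneg y)
  have hsum := summable_norm_cauchyCoeff_mul_pow (x := x) hq hyt
  suffices h : ∑' n, cauchyCoeff q x y n * t ^ n
      = (∏' j : ℕ, (1 - x * t * q ^ j)) / ∏' j : ℕ, (1 - y * t * q ^ j) from
    h ▸ hsum.of_norm.hasSum
  refine eq_tprod_div_tprod_of_qDifference (f := fun u => ∑' n, cauchyCoeff q x y n * u ^ n)
    hq hyt (fun N => cauchySeries_qDifference hq (hyN N)) ?_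
  simpa using tendsto_tsum_mul_pow_of_tendsto_zero hsum
    (by simpa using (tendsto_pow_atTop_nhds_zero_of_norm_lt_one hq).mul_const t) hqN

end CauchyCoeff

lemma cauchyP_zero_left (q z : ℂ) (n : ℕ) :
    cauchyP q 0 z n = (-1) ^ n * q ^ (n * (n - 1) / 2) * z ^ n := by
  have h (j : ℕ) : 0 - q ^ j * z = -z * q ^ j := by ring
  simp only [cauchyP, h, prod_mul_distrib, prod_const, card_range, neg_pow z]
  rw [prod_pow_eq_pow_sum (range n) (fun j => j) q, sum_range_id]
  ring

lemma qBinom_div_qPoch {q : ℂ} {n : ℕ} (h : qPoch q q n ≠ 0) (k : ℕ) :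
    qBinom q n k / qPoch q q n = (qPoch q q k)⁻¹ * (qPoch q q (n - k))⁻¹ := by
  rw [qBinom, div_div_cancel_left' h, mul_inv]

lemma Fpoly_mul_neg_one_pow_mul_pow {q : ℂ} (hq : q ≠ 0) (x y z : ℂ) (n : ℕ) :
    Fpoly q x y z n * (-1) ^ n * q ^ (n * (n - 1) / 2)
      = ∑ k ∈ range (n + 1), qBinom q n k * cauchyP q 0 z k * cauchyP q y x (n - k) := by
  have hsign : ((-1 : ℂ) ^ n) * (-1) ^ n = 1 := by rw [← mul_pow, neg_one_mul, neg_neg, one_pow]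
  have hpow : (q ^ (n * (n - 1) / 2))⁻¹ * q ^ (n * (n - 1) / 2) = 1 :=
    inv_mul_cancel₀ (pow_ne_zero _ hq)
  rw [Fpoly, zpow_neg, zpow_natCast]
  calc _ = ((-1) ^ n * (-1) ^ n) * ((q ^ (n * (n - 1) / 2))⁻¹ * q ^ (n * (n - 1) / 2)) *
        ∑ k ∈ range (n + 1),
          qBinom q n k * (-1) ^ k * q ^ (k * (k - 1) / 2) * cauchyP q y x (n - k) * z ^ k := by
        ring
    _ = _ := by
        rw [hsign, hpow, one_mul, one_mul]
        exact sum_congr rfl fun k _ => by rw [cauchyP_zero_left]; ring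

lemma Fpoly_term_eq_sum_cauchyCoeff {q : ℂ} (hq0 : q ≠ 0) (hq : ‖q‖ < 1) (x y z t : ℂ)
    (n : ℕ) :
    Fpoly q x y z n * (-1) ^ n * q ^ (n * (n - 1) / 2) * t ^ n / qPoch q q n
      = ∑ k ∈ range (n + 1),
          cauchyCoeff q z 0 k * t ^ k * (cauchyCoeff q x y (n - k) * t ^ (n - k)) := by
  rw [Fpoly_mul_neg_one_pow_mul_pow hq0, sum_mul, sum_div]
  refine sum_congr rfl fun k hk => ?_
  rw [← pow_mul_pow_sub t (Nat.lt_succ_iff.1 (mem_range.1 hk))]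
  calc _ = qBinom q n k / qPoch q q n *
        (cauchyP q 0 z k * cauchyP q y x (n - k) * (t ^ k * t ^ (n - k))) := by
        ring
    _ = _ := by
        rw [qBinom_div_qPoch (qPoch_ne_zero hq n), cauchyCoeff, cauchyCoeff]
        ring

theorem trivariate_generating_function (q x y z t : ℂ) (hq0 : 0 < ‖q‖)
    (hq1 : ‖q‖ < 1) (hyt : ‖y * t‖ < 1) :
    HasSum (fun n : ℕ =>
        Fpoly q x y z n * (-1) ^ n * q ^ (n * (n - 1) / 2) * t ^ n / qPoch q q n)
      ((∏' j : ℕ, (1 - x * t * q ^ j)) * (∏' j : ℕ, (1 - z * t * q ^ j)) /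
        ∏' j : ℕ, (1 - y * t * q ^ j)) := by
  have h0t : ‖0 * t‖ < 1 := by simp
  have hX := hasSum_cauchyCoeff_mul_pow (x := x) hq1 hyt
  have hZ := hasSum_cauchyCoeff_mul_pow (x := z) hq1 h0t
  simp only [zero_mul, sub_zero, tprod_one, div_one] at hZ
  have hprod := hasSum_sum_range_mul_of_summable_norm
    (summable_norm_cauchyCoeff_mul_pow (x := z) hq1 h0t)
    (summable_norm_cauchyCoeff_mul_pow (x := x) hq1 hyt)
  rw [hZ.tsum_eq, hX.tsum_eq, ← mul_div_assoc, mul_comm] at hprod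
  exact hprod.congr_fun (Fpoly_term_eq_sum_cauchyCoeff (norm_pos_iff.1 hq0) hq1 x y z t)
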